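/- Fix ℓ, k, s ∈ N and ε, η, L ≥ 0. Let A_1,…,A_s, U_1,…,U_s ∈ R^{ℓ×k} be matrices such that for all i: colspan(A_i) = colspan(U_i), ‖A_i‖ ≤ L (spectral norm), and σ_min(U_i) ≥ η. Assume also σ_min([A_1 | … | A_s]) ≥ ε. Then σ_min([U_1 | … | U_s]) ≥ η·ε/L. -/

import Mathlib

open MeasureTheory ProbabilityTheory Matrix BigOperators

noncomputable section

/-- Euclidean norm of a finitely indexed real vector. -/
def enorm2 {ι : Type*} [Fintype ι] (x : ι → ℝ) : ℝ :=
  Real.sqrt (∑ i, x i ^ 2)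

/-- `sval A k`: the `k`-th largest singular value of `A` (Courant–Fischer min–max);
`sval A 1` is the spectral norm. -/
def sval {ι κ : Type*} [Fintype ι] [Fintype κ] (A : Matrix ι κ ℝ) (k : ℕ) : ℝ :=
  ⨆ V : {V : Submodule ℝ (κ → ℝ) // Module.finrank ℝ V = k},
    ⨅ x : {x : κ → ℝ // x ∈ V.1 ∧ enorm2 x = 1}, enorm2 (A.mulVec x.1)

/-- Frobenius norm. -/
def frobNorm {ι κ : Type*} [Fintype ι] [Fintype κ] (A : Matrix ι κ ℝ) : ℝ :=
  Real.sqrt (∑ i, ∑ j, A i j ^ 2)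

/-- The law of a vector with i.i.d. `N(0, ρ²)` coordinates. -/
def vecGauss (ι : Type*) [Fintype ι] (ρ : ℝ) : Measure (ι → ℝ) :=
  Measure.pi fun _ => gaussianReal 0 (ρ ^ 2).toNNReal

instance vecGauss.instIsProbabilityMeasure (ι : Type*) [Fintype ι] (ρ : ℝ) :
    IsProbabilityMeasure (vecGauss ι ρ) := by
  unfold vecGauss; infer_instance

/-- The law of an `ι × κ` matrix (as a function) with i.i.d. `N(0, ρ²)` entries. -/
def matGauss (ι κ : Type*) [Fintype ι] [Fintype κ] (ρ : ℝ) : Measure (ι → κ → ℝ) :=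
  Measure.pi fun _ => vecGauss κ ρ

instance matGauss.instIsProbabilityMeasure (ι κ : Type*) [Fintype ι] [Fintype κ] (ρ : ℝ) :
    IsProbabilityMeasure (matGauss ι κ ρ) := by
  unfold matGauss; infer_instance

/-- Monotone tuples, used to index the columns of symmetrized Kronecker powers. -/
noncomputable instance instFintypeMonoTuples (d m : ℕ) :
    Fintype {f : Fin d → Fin m // Monotone f} :=
  Fintype.ofFinite _

/-- Orthogonal projector of `(ℝⁿ)^{⊗ d}` onto the subspace of symmetric tensors. -/
def symProj (n d : ℕ) : Matrix (Fin d → Fin n) (Fin d → Fin n) ℝ :=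
  fun r c => (1 / (Nat.factorial d : ℝ)) *
    ∑ π : Equiv.Perm (Fin d), if r = c ∘ π then 1 else 0

/-- Symmetrized `d`-th Kronecker power `U^{⊛ d}`: the column indexed by a monotone
tuple `i₁ ≤ … ≤ i_d` is `(1/d!) ∑_π u_{i_{π(1)}} ⊗ ⋯ ⊗ u_{i_{π(d)}}`. -/
def symKronPow {n m : ℕ} (U : Matrix (Fin n) (Fin m) ℝ) (d : ℕ) :
    Matrix (Fin d → Fin n) {f : Fin d → Fin m // Monotone f} ℝ :=
  fun r c => (1 / (Nat.factorial d : ℝ)) *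
    ∑ π : Equiv.Perm (Fin d), ∏ j, U (r j) (c.1 (π j))

/-- Kronecker product of `d` matrices, rows/columns indexed by tuples. -/
def kronCols {n m : ℕ} (d : ℕ) (Us : Fin d → Matrix (Fin n) (Fin m) ℝ) :
    Matrix (Fin d → Fin n) (Fin d → Fin m) ℝ :=
  fun r c => ∏ j, Us j (r j) (c j)

/-- The symmetrizing selector matrix `Perm_avg`. -/
def permAvg (d m : ℕ) : Matrix (Fin d → Fin m) {f : Fin d → Fin m // Monotone f} ℝ :=
  fun g c => (1 / (Nat.factorial d : ℝ)) *
    ∑ π : Equiv.Perm (Fin d), if g = c.1 ∘ π then 1 else 0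

/-- `P` is the symmetric idempotent matrix with kernel exactly `W`, i.e. the
orthogonal projection onto the orthogonal complement of `W`. -/
def IsOrthProjKer {ι : Type*} [Fintype ι] (P : Matrix ι ι ℝ) (W : Submodule ℝ (ι → ℝ)) : Prop :=
  Pᵀ = P ∧ P * P = P ∧ ∀ v : ι → ℝ, P.mulVec v = 0 ↔ v ∈ W

/-- Column span of a matrix. -/
def colSpan {ι κ : Type*} (A : Matrix ι κ ℝ) : Submodule ℝ (ι → ℝ) :=
  Submodule.span ℝ (Set.range fun j => fun i => A i j)

/-- Horizontal concatenation of a family of matrices. -/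
def hcat {ι κ₁ κ₂ : Type*} (M : κ₁ → Matrix ι κ₂ ℝ) : Matrix ι (κ₁ × κ₂) ℝ :=
  fun r c => M c.1 r c.2

/-! Since `colspan Uᵢ ⊆ colspan Aᵢ`, we can write `Uᵢ = Aᵢ Nᵢ` with `Nᵢ` square, and then
`η ‖z‖ ≤ ‖Uᵢ z‖ = ‖Aᵢ (Nᵢ z)‖ ≤ L ‖Nᵢ z‖`. Consequently `[U₁ | … | Uₛ] x = [A₁ | … | Aₛ] y` with
`yᵢ = Nᵢ xᵢ` and `‖y‖ ≥ (η / L) ‖x‖`, so `‖[U₁ | … | Uₛ] x‖ ≥ ε ‖y‖ ≥ (η ε / L) ‖x‖`. -/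

section EuclideanNorm

variable {κ : Type*} [Fintype κ]

lemma enorm2_eq_norm (x : κ → ℝ) : enorm2 x = ‖WithLp.toLp 2 x‖ := by
  simp [enorm2, EuclideanSpace.norm_eq]

lemma enorm2_nonneg (x : κ → ℝ) : 0 ≤ enorm2 x := Real.sqrt_nonneg _

lemma sq_enorm2 (x : κ → ℝ) : enorm2 x ^ 2 = ∑ i, x i ^ 2 :=
  Real.sq_sqrt (Finset.sum_nonneg fun _ _ => sq_nonneg _)

@[simp]
lemma enorm2_zero : enorm2 (0 : κ → ℝ) = 0 := by simp [enorm2]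

lemma enorm2_smul (c : ℝ) (x : κ → ℝ) : enorm2 (c • x) = |c| * enorm2 x := by
  simp only [enorm2_eq_norm, WithLp.toLp_smul, norm_smul, Real.norm_eq_abs]

lemma enorm2_ne_zero {x : κ → ℝ} (hx : x ≠ 0) : enorm2 x ≠ 0 := by
  simpa [enorm2_eq_norm] using hx

lemma enorm2_inv_smul_self {x : κ → ℝ} (hx : x ≠ 0) : enorm2 ((enorm2 x)⁻¹ • x) = 1 := by
  rw [enorm2_smul, abs_inv, abs_of_nonneg (enorm2_nonneg x), inv_mul_cancel₀ (enorm2_ne_zero hx)]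

lemma exists_enorm2_mulVec_le {ι : Type*} [Fintype ι] (A : Matrix ι κ ℝ) :
    ∃ C, 0 ≤ C ∧ ∀ x, enorm2 (A *ᵥ x) ≤ C * enorm2 x := by
  classical
  let T := LinearMap.toContinuousLinearMap (Matrix.toEuclideanLin A)
  exact ⟨‖T‖, norm_nonneg _, fun x => by
    simpa [enorm2_eq_norm, T] using T.le_opNorm (WithLp.toLp 2 x)⟩

end EuclideanNorm

section SingularValues

variable {ι κ : Type*} [Fintype ι] [Fintype κ]

lemma sval_nonneg (A : Matrix ι κ ℝ) (n : ℕ) : 0 ≤ sval A n :=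
  Real.iSup_nonneg fun _ => Real.iInf_nonneg fun _ => enorm2_nonneg _

lemma sval_card_eq_iInf (A : Matrix ι κ ℝ) :
    sval A (Fintype.card κ) = ⨅ x : {x : κ → ℝ // enorm2 x = 1}, enorm2 (A *ᵥ x.1) := by
  let _ : Unique {V : Submodule ℝ (κ → ℝ) // Module.finrank ℝ V = Fintype.card κ} :=
    { default := ⟨⊤, by simp⟩
      uniq := fun V => Subtype.ext (Submodule.eq_top_of_finrank_eq (by simp [V.2])) }
  rw [sval, ciSup_unique]
  exact (Equiv.subtypeEquivRight fun x =>
    and_iff_right (Submodule.mem_top : x ∈ (⊤ : Submodule ℝ (κ → ℝ)))).iInf_congr fun _ => rfl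

lemma mul_enorm2_le_of_le_sval_card {A : Matrix ι κ ℝ} {c : ℝ}
    (hc : c ≤ sval A (Fintype.card κ)) (x : κ → ℝ) : c * enorm2 x ≤ enorm2 (A *ᵥ x) := by
  rcases eq_or_ne x 0 with rfl | hx
  · simp
  have hunit : c ≤ enorm2 (A *ᵥ ((enorm2 x)⁻¹ • x)) := by
    rw [sval_card_eq_iInf] at hc
    have hbdd : BddBelow (Set.range fun y : {y : κ → ℝ // enorm2 y = 1} => enorm2 (A *ᵥ y.1)) :=
      ⟨0, by rintro _ ⟨y, rfl⟩; exact enorm2_nonneg _⟩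
    exact hc.trans (ciInf_le hbdd ⟨(enorm2 x)⁻¹ • x, enorm2_inv_smul_self hx⟩)
  rw [mulVec_smul, enorm2_smul, abs_inv, abs_of_nonneg (enorm2_nonneg x),
    le_inv_mul_iff₀ ((enorm2_nonneg x).lt_of_ne' (enorm2_ne_zero hx)), mul_comm] at hunit
  exact hunit

lemma le_sval_card_of_forall [Nonempty κ] {A : Matrix ι κ ℝ} {c : ℝ}
    (h : ∀ x, c * enorm2 x ≤ enorm2 (A *ᵥ x)) : c ≤ sval A (Fintype.card κ) := by
  have hone : (fun _ : κ => (1 : ℝ)) ≠ 0 := Function.ne_iff.mpr ⟨Classical.arbitrary κ, one_ne_zero⟩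
  have : Nonempty {x : κ → ℝ // enorm2 x = 1} := ⟨⟨_, enorm2_inv_smul_self hone⟩⟩
  rw [sval_card_eq_iInf]
  exact le_ciInf fun x => by simpa [x.2] using h x.1

lemma sval_card_of_isEmpty [IsEmpty κ] (A : Matrix ι κ ℝ) : sval A (Fintype.card κ) = 0 := by
  have : IsEmpty {x : κ → ℝ // enorm2 x = 1} :=
    ⟨fun x => by simpa [Subsingleton.elim x.1 0] using x.2⟩
  rw [sval_card_eq_iInf, Real.iInf_of_isEmpty]

lemma iInf_enorm2_mulVec_le {A : Matrix ι κ ℝ} {C : ℝ} (hC : 0 ≤ C)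
    (h : ∀ x, enorm2 (A *ᵥ x) ≤ C * enorm2 x) (V : Submodule ℝ (κ → ℝ)) :
    ⨅ x : {x : κ → ℝ // x ∈ V ∧ enorm2 x = 1}, enorm2 (A *ᵥ x.1) ≤ C := by
  rcases isEmpty_or_nonempty {x : κ → ℝ // x ∈ V ∧ enorm2 x = 1} with hV | hV
  · rwa [Real.iInf_of_isEmpty]
  obtain ⟨x⟩ := hV
  refine (ciInf_le ⟨0, ?_⟩ x).trans (by simpa [x.2.2] using h x.1)
  rintro _ ⟨y, rfl⟩
  exact enorm2_nonneg _

lemma enorm2_mulVec_le_of_sval_one_le {A : Matrix ι κ ℝ} {L : ℝ} (hL : sval A 1 ≤ L)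
    (x : κ → ℝ) : enorm2 (A *ᵥ x) ≤ L * enorm2 x := by
  rcases eq_or_ne x 0 with rfl | hx
  · simp
  obtain ⟨C, hC, hAC⟩ := exists_enorm2_mulVec_le A
  set u := (enorm2 x)⁻¹ • x
  have hu : enorm2 u = 1 := enorm2_inv_smul_self hx
  have hu0 : u ≠ 0 := fun h => by simp [h] at hu
  -- every unit vector of `ℝ ∙ u` is `± u`
  have hline : enorm2 (A *ᵥ u) ≤
      ⨅ y : {y : κ → ℝ // y ∈ ℝ ∙ u ∧ enorm2 y = 1}, enorm2 (A *ᵥ y.1) := by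
    have : Nonempty {y : κ → ℝ // y ∈ ℝ ∙ u ∧ enorm2 y = 1} :=
      ⟨⟨u, Submodule.mem_span_singleton_self u, hu⟩⟩
    refine le_ciInf fun ⟨y, hy, hy1⟩ => ?_
    obtain ⟨t, rfl⟩ := Submodule.mem_span_singleton.mp hy
    rw [enorm2_smul, hu, mul_one] at hy1
    simp [mulVec_smul, enorm2_smul, hy1]
  have hsval : enorm2 (A *ᵥ u) ≤ sval A 1 := by
    have hbdd : BddAbove (Set.range fun V : {V : Submodule ℝ (κ → ℝ) // Module.finrank ℝ V = 1} =>
        ⨅ y : {y : κ → ℝ // y ∈ V.1 ∧ enorm2 y = 1}, enorm2 (A *ᵥ y.1)) := by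
      refine ⟨C, ?_⟩
      rintro _ ⟨V, rfl⟩
      exact iInf_enorm2_mulVec_le hC hAC V.1
    exact hline.trans (le_ciSup hbdd ⟨ℝ ∙ u, finrank_span_singleton hu0⟩)
  rw [mulVec_smul, enorm2_smul, abs_inv, abs_of_nonneg (enorm2_nonneg x),
    inv_mul_le_iff₀ ((enorm2_nonneg x).lt_of_ne' (enorm2_ne_zero hx)), mul_comm] at hsval
  exact hsval.trans (mul_le_mul_of_nonneg_right hL (enorm2_nonneg x))

end SingularValues

section Blocks

variable {ι κ₁ κ₂ : Type*} [Fintype κ₁] [Fintype κ₂]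

lemma hcat_mulVec (M : κ₁ → Matrix ι κ₂ ℝ) (x : κ₁ × κ₂ → ℝ) :
    hcat M *ᵥ x = ∑ i, M i *ᵥ Function.curry x i := by
  ext r
  simp [hcat, mulVec, dotProduct, Fintype.sum_prod_type]

lemma sq_enorm2_eq_sum_curry (x : κ₁ × κ₂ → ℝ) :
    enorm2 x ^ 2 = ∑ i, enorm2 (Function.curry x i) ^ 2 := by
  simp only [sq_enorm2, Fintype.sum_prod_type, Function.curry_apply]

lemma mul_enorm2_le_enorm2_uncurry {c : ℝ} (hc : 0 ≤ c) {x : κ₁ × κ₂ → ℝ}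
    {y : κ₁ → κ₂ → ℝ} (h : ∀ i, c * enorm2 (Function.curry x i) ≤ enorm2 (y i)) :
    c * enorm2 x ≤ enorm2 (Function.uncurry y) := by
  refine (pow_le_pow_iff_left₀ (mul_nonneg hc (enorm2_nonneg x)) (enorm2_nonneg _)
    two_ne_zero).mp ?_
  rw [mul_pow, sq_enorm2_eq_sum_curry, sq_enorm2_eq_sum_curry, Function.curry_uncurry,
    Finset.mul_sum]
  gcongr with i
  rw [← mul_pow]
  exact pow_le_pow_left₀ (mul_nonneg hc (enorm2_nonneg _)) (h i) 2

lemma mul_sval_hcat_le_sval_hcat_mul [Fintype ι] (A : κ₁ → Matrix ι κ₂ ℝ) (N : κ₁ → Matrix κ₂ κ₂ ℝ)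
    {c : ℝ} (hc : 0 ≤ c) (hN : ∀ i z, c * enorm2 z ≤ enorm2 (N i *ᵥ z)) :
    c * sval (hcat A) (Fintype.card (κ₁ × κ₂)) ≤
      sval (hcat fun i => A i * N i) (Fintype.card (κ₁ × κ₂)) := by
  rcases isEmpty_or_nonempty (κ₁ × κ₂) with hempty | hnonempty
  · rw [sval_card_of_isEmpty, sval_card_of_isEmpty, mul_zero]
  refine le_sval_card_of_forall fun x => ?_
  let y i := N i *ᵥ Function.curry x i
  have hAy : hcat A *ᵥ Function.uncurry y = hcat (fun i => A i * N i) *ᵥ x := by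
    simp only [hcat_mulVec, Function.curry_uncurry, y, mulVec_mulVec]
  calc c * sval (hcat A) _ * enorm2 x
      = sval (hcat A) _ * (c * enorm2 x) := by ring
    _ ≤ sval (hcat A) _ * enorm2 (Function.uncurry y) :=
      mul_le_mul_of_nonneg_left (mul_enorm2_le_enorm2_uncurry hc fun i => hN i _)
        (sval_nonneg _ _)
    _ ≤ enorm2 (hcat A *ᵥ Function.uncurry y) := mul_enorm2_le_of_le_sval_card le_rfl _
    _ = _ := by rw [hAy]

end Blocks

lemma exists_eq_mul_of_colSpan_le {ι κ κ' : Type*} [Fintype κ] {A : Matrix ι κ ℝ}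
    {B : Matrix ι κ' ℝ} (h : colSpan B ≤ colSpan A) : ∃ N : Matrix κ κ' ℝ, B = A * N := by
  have hcol : ∀ j, (fun i => B i j) ∈ colSpan A := fun j => h (Submodule.subset_span ⟨j, rfl⟩)
  choose c hc using fun j => (Submodule.mem_span_range_iff_exists_fun ℝ).mp (hcol j)
  refine ⟨of fun m j => c j m, ?_⟩
  ext i j
  rw [← congrFun (hc j) i]
  simp [mul_apply, mul_comm]

theorem statement17_general {l k s : ℕ} (ε η L : ℝ) (hη : 0 ≤ η) (hL : 0 ≤ L)
    (A U : Fin s → Matrix (Fin l) (Fin k) ℝ)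
    (hspan : ∀ i, colSpan (A i) = colSpan (U i))
    (hA : ∀ i, sval (A i) 1 ≤ L)
    (hU : ∀ i, η ≤ sval (U i) k)
    (hAs : ε ≤ sval (hcat A) (s * k)) :
    η * ε / L ≤ sval (hcat U) (s * k) := by
  rcases hL.eq_or_lt with rfl | hLpos
  · rw [div_zero]
    exact sval_nonneg _ _
  choose N hN using fun i => exists_eq_mul_of_colSpan_le (hspan i).ge
  have hNlower : ∀ i z, η / L * enorm2 z ≤ enorm2 (N i *ᵥ z) := fun i z => by
    have hUz : η * enorm2 z ≤ enorm2 (U i *ᵥ z) :=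
      mul_enorm2_le_of_le_sval_card (by simpa using hU i) z
    rw [hN i, ← mulVec_mulVec] at hUz
    rw [div_mul_eq_mul_div, div_le_iff₀ hLpos, mul_comm _ L]
    exact hUz.trans (enorm2_mulVec_le_of_sval_one_le (hA i) _)
  have hcard : s * k = Fintype.card (Fin s × Fin k) := by simp
  rw [hcard] at hAs ⊢
  calc η * ε / L = η / L * ε := by ring
    _ ≤ η / L * sval (hcat A) _ := by gcongr
    _ ≤ sval (hcat fun i => A i * N i) _ :=
      mul_sval_hcat_le_sval_hcat_mul A N (by positivity) hNlower
    _ = sval (hcat U) _ := by rw [← funext hN]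

/-- change-of-basis bound for block matrices.
If `colspan(A_i) = colspan(U_i)`, `‖A_i‖ ≤ L`, `σ_min(U_i) ≥ η` for all `i`, and
`σ_min([A_1 | … | A_s]) ≥ ε`, then `σ_min([U_1 | … | U_s]) ≥ η·ε/L`. -/
theorem statement17 {l k s : ℕ} (ε η L : ℝ) (hε : 0 ≤ ε) (hη : 0 ≤ η) (hL : 0 ≤ L)
    (A U : Fin s → Matrix (Fin l) (Fin k) ℝ)
    (hspan : ∀ i, colSpan (A i) = colSpan (U i))
    (hA : ∀ i, sval (A i) 1 ≤ L)
    (hU : ∀ i, η ≤ sval (U i) k)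
    (hAs : ε ≤ sval (hcat A) (s * k)) :
    η * ε / L ≤ sval (hcat U) (s * k) :=
  statement17_general ε η L hη hL A U hspan hA hU hAs
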